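/- arXiv:1401.4541 — 4 statements merged into one kernel-verified Lean document; each statement's English description precedes it below -/
import Mathlib

section
/- Let X be a Banach space and Θ : X → (-∞, ∞] a proper, weakly lower semi-continuous, uniformly convex function. Then Θ has the Kadec property: for any sequence {xₙ} ⊂ X with xₙ ⇀ x weakly and Θ(xₙ) → Θ(x) < ∞, one has xₙ → x strongly. -/
/-!
Let `vₙ = (uₙ + x)/2`. Uniform convexity gives
`Θ vₙ + h ‖uₙ - x‖ / 4 ≤ (Θ uₙ + Θ x)/2`, and since `vₙ ⇀ x`, weak lower semicontinuity gives
`Θ x ≤ liminf Θ vₙ`; together with `Θ uₙ → Θ x` this forces `h ‖uₙ - x‖ → 0`. Weakly convergent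
sequences are bounded (uniform boundedness on the dual), and `h` is bounded away from `0` on every
compact interval `[ε, C]` with `ε > 0`, hence `‖uₙ - x‖ → 0`.

For a real-valued `Θ` the liminf is only meaningful if `Θ vₙ` is bounded below. If it were not,
averaging `vₙ` with a fixed point would make `Θ` unbounded below along a sequence converging weakly
to any prescribed `z`, so `Θ z ≤ 0` for all `z`; but a uniformly convex function on a nontrivial
space grows at least linearly along some ray.
-/

open Filter Set Topology

theorem exists_norm_le_of_forall_norm_dual_le {𝕜 E ι : Type*} [RCLike 𝕜] [NormedAddCommGroup E]
    [NormedSpace 𝕜 E] {u : ι → E} (hu : ∀ f : StrongDual 𝕜 E, ∃ C, ∀ i, ‖f (u i)‖ ≤ C) :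
    ∃ C, ∀ i, ‖u i‖ ≤ C := by
  obtain ⟨C, hC⟩ :=
    banach_steinhaus (g := fun i => NormedSpace.inclusionInDoubleDualLi 𝕜 (u i)) hu
  exact ⟨C, fun i => (LinearIsometry.norm_map _ (u i)).symm.trans_le (hC i)⟩

theorem tendsto_zero_of_tendsto_comp_zero {ι : Type*} {l : Filter ι} {φ : ℝ → ℝ}
    (hφc : Continuous φ) (hφ : ∀ r, 0 < r → 0 < φ r) {t : ι → ℝ} {C : ℝ}
    (ht : ∀ i, t i ∈ Icc 0 C) (hφt : Tendsto (φ ∘ t) l (𝓝 0)) : Tendsto t l (𝓝 0) := by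
  refine tendsto_order.2 ⟨fun a ha => .of_forall fun i => ha.trans_le (ht i).1, fun ε hε => ?_⟩
  obtain ⟨r, hr, hmin⟩ := isCompact_Icc.exists_isMinOn (nonempty_Icc.2 (le_max_left ε C))
    hφc.continuousOn
  filter_upwards [hφt.eventually_lt_const (hφ r (hε.trans_le hr.1))] with i hi
  by_contra! hεi
  exact (hmin ⟨hεi, (ht i).2.trans (le_max_right ε C)⟩).not_gt hi

section Convexity

variable {E : Type*} [NormedAddCommGroup E] [NormedSpace ℝ E] {φ : ℝ → ℝ} {f : E → ℝ}

theorem uniformConvexOn_univ_of_forall_mem_Ioo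
    (hf : ∀ x y : E, ∀ t : ℝ, 0 < t → t < 1 →
      f (t • x + (1 - t) • y) + t * (1 - t) * φ ‖x - y‖ ≤ t * f x + (1 - t) * f y) :
    UniformConvexOn univ φ f := by
  refine ⟨convex_univ, fun x _ y _ a b ha hb hab => ?_⟩
  obtain rfl : b = 1 - a := by linarith
  rcases ha.eq_or_lt with rfl | ha
  · simp
  rcases hb.eq_or_lt with hb | hb
  · obtain rfl : a = 1 := by linarith
    simp
  have := hf x y a ha (by linarith)
  simp only [smul_eq_mul]
  linarith

theorem UniformConvexOn.convexOn_of_nonneg {s : Set E} (hf : UniformConvexOn s φ f)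
    (hφ : ∀ r, 0 ≤ r → 0 ≤ φ r) : ConvexOn ℝ s f :=
  ⟨hf.1, fun _ hx _ hy _ _ ha hb hab => (hf.2 hx hy ha hb hab).trans <|
    sub_le_self _ <| mul_nonneg (mul_nonneg ha hb) (hφ _ (norm_nonneg _))⟩

theorem ConvexOn.le_apply_add_smul_sub (hf : ConvexOn ℝ univ f) (x y : E) {s : ℝ} (hs : 1 ≤ s) :
    f x + s * (f y - f x) ≤ f (x + s • (y - x)) := by
  have hs0 : 0 < s := by linarith
  have hy : s⁻¹ • (x + s • (y - x)) + (1 - s⁻¹) • x = y := by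
    rw [smul_add, smul_smul, inv_mul_cancel₀ hs0.ne']
    module
  have hconv := hf.2 (mem_univ (x + s • (y - x))) (mem_univ x) (inv_nonneg.2 hs0.le)
    (sub_nonneg.2 (inv_le_one_of_one_le₀ hs)) (add_sub_cancel _ _)
  rw [hy, smul_eq_mul, smul_eq_mul] at hconv
  have hexpand : s * (s⁻¹ * f (x + s • (y - x)) + (1 - s⁻¹) * f x)
      = f (x + s • (y - x)) + (s - 1) * f x := by
    field_simp
  linarith [mul_le_mul_of_nonneg_left hconv hs0.le]

theorem ConvexOn.not_bddAbove_range_of_lt (hf : ConvexOn ℝ univ f) {x y : E} (hxy : f x < f y) :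
    ¬BddAbove (range f) := by
  rintro ⟨M, hM⟩
  have hgrow : Tendsto (fun s : ℝ => f x + s * (f y - f x)) atTop atTop :=
    tendsto_atTop_add_const_left _ _ (tendsto_id.atTop_mul_const (sub_pos.2 hxy))
  obtain ⟨s, hsM, hs⟩ := ((hgrow.eventually_gt_atTop M).and (eventually_ge_atTop 1)).exists
  exact hsM.not_ge ((hf.le_apply_add_smul_sub x y hs).trans (hM (mem_range_self _)))

theorem UniformConvexOn.not_bddAbove_range [Nontrivial E] (hf : UniformConvexOn univ φ f)
    (hφ0 : ∀ r, 0 ≤ r → 0 ≤ φ r) (hφ : ∀ r, 0 < r → 0 < φ r) : ¬BddAbove (range f) := by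
  obtain ⟨y, hy⟩ := exists_ne (0 : E)
  have hmid := hf.2 (mem_univ y) (mem_univ (-y)) (by norm_num : (0 : ℝ) ≤ 1 / 2)
    (by norm_num : (0 : ℝ) ≤ 1 / 2) (add_halves 1)
  have hzero : (1 / 2 : ℝ) • y + (1 / 2 : ℝ) • -y = 0 := by module
  rw [hzero, smul_eq_mul, smul_eq_mul] at hmid
  have hgap : 0 < φ ‖y - -y‖ := hφ _ <| norm_pos_iff.2 <| by
    rw [sub_neg_eq_add, ← two_smul ℝ]
    exact smul_ne_zero two_ne_zero hy
  have hconv := hf.convexOn_of_nonneg hφ0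
  by_cases hfy : f 0 < f y
  · exact hconv.not_bddAbove_range_of_lt hfy
  · exact hconv.not_bddAbove_range_of_lt (x := 0) (y := -y) (by linarith)

end Convexity

section WeakConvergence

variable {X : Type*} [NormedAddCommGroup X] [NormedSpace ℝ X] {u : ℕ → X} {x : X}

theorem exists_norm_le_of_forall_tendsto_dual
    (hu : ∀ f : StrongDual ℝ X, Tendsto (fun n => f (u n)) atTop (𝓝 (f x))) :
    ∃ C, ∀ n, ‖u n‖ ≤ C :=
  exists_norm_le_of_forall_norm_dual_le fun f =>
    let ⟨C, hC⟩ := (hu f).norm.bddAbove_range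
    ⟨C, fun n => hC ⟨n, rfl⟩⟩

theorem tendsto_dual_smul_add_smul
    (hu : ∀ f : StrongDual ℝ X, Tendsto (fun n => f (u n)) atTop (𝓝 (f x))) (a b : ℝ) (w : X)
    (f : StrongDual ℝ X) :
    Tendsto (fun n => f (a • u n + b • w)) atTop (𝓝 (f (a • x + b • w))) := by
  simpa only [map_add, map_smul, smul_eq_mul] using ((hu f).const_mul a).add_const (b * f w)

theorem isBoundedUnder_ge_of_forall_tendsto_dual {Θ : X → ℝ} (hconv : ConvexOn ℝ univ Θ)
    (hunb : ¬BddAbove (range Θ))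
    (hwlsc : ∀ (u : ℕ → X) (z : X),
      (∀ f : StrongDual ℝ X, Tendsto (fun n => f (u n)) atTop (𝓝 (f z))) →
      Θ z ≤ liminf (fun n => Θ (u n)) atTop)
    (hu : ∀ f : StrongDual ℝ X, Tendsto (fun n => f (u n)) atTop (𝓝 (f x))) :
    IsBoundedUnder (· ≥ ·) atTop fun n => Θ (u n) := by
  by_contra hbdd
  refine hunb ⟨0, forall_mem_range.2 fun z => ?_⟩
  set w : X := (2 : ℝ) • z - x
  have hz : (1 / 2 : ℝ) • x + (1 / 2 : ℝ) • w = z := by module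
  have hp := tendsto_dual_smul_add_smul hu (1 / 2) (1 / 2) w
  rw [hz] at hp
  have hle : ∀ n, Θ ((1 / 2 : ℝ) • u n + (1 / 2 : ℝ) • w) ≤ 1 / 2 * Θ (u n) + 1 / 2 * Θ w :=
    fun n => hconv.2 (mem_univ _) (mem_univ _) (by norm_num) (by norm_num) (by norm_num)
  have hpbdd : ¬IsBoundedUnder (· ≥ ·) atTop fun n => Θ ((1 / 2 : ℝ) • u n + (1 / 2 : ℝ) • w) := by
    rintro ⟨b, hb⟩
    refine hbdd ⟨2 * b - Θ w, eventually_map.2 ?_⟩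
    filter_upwards [eventually_map.1 hb] with n hn
    linarith [hle n, show b ≤ _ from hn]
  have hlsc := hwlsc _ z hp
  -- In `ℝ` the liminf of a sequence that is unbounded below is the junk value `0`.
  rwa [Real.liminf_of_not_isBoundedUnder hpbdd] at hlsc

theorem UniformConvexOn.tendsto_modulus_norm_sub {Θ : X → ℝ} {φ : ℝ → ℝ}
    (hf : UniformConvexOn univ φ Θ) (hφ0 : ∀ r, 0 ≤ r → 0 ≤ φ r)
    (hval : Tendsto (fun n => Θ (u n)) atTop (𝓝 (Θ x)))
    (hbdd : IsBoundedUnder (· ≥ ·) atTop fun n => Θ ((1 / 2 : ℝ) • u n + (1 / 2 : ℝ) • x))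
    (hmid : Θ x ≤ liminf (fun n => Θ ((1 / 2 : ℝ) • u n + (1 / 2 : ℝ) • x)) atTop) :
    Tendsto (fun n => φ ‖u n - x‖) atTop (𝓝 0) := by
  refine tendsto_order.2
    ⟨fun a ha => .of_forall fun n => ha.trans_le (hφ0 _ (norm_nonneg _)), fun ε hε => ?_⟩
  have hε8 : 0 < ε / 8 := by positivity
  filter_upwards [hval.eventually_lt_const (lt_add_of_pos_right (Θ x) hε8),
    eventually_lt_of_lt_liminf ((sub_lt_self (Θ x) hε8).trans_le hmid) hbdd] with n hun hvn
  have := hf.2 (mem_univ (u n)) (mem_univ x) (by norm_num : (0 : ℝ) ≤ 1 / 2)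
    (by norm_num : (0 : ℝ) ≤ 1 / 2) (add_halves 1)
  simp only [smul_eq_mul] at this
  linarith

end WeakConvergence

theorem uniformly_convex_kadec_general {X : Type*} [NormedAddCommGroup X] [NormedSpace ℝ X]
    (Θ : X → ℝ) (h : ℝ → ℝ) (hcont : Continuous h)
    (hnonneg : ∀ t, 0 ≤ t → 0 ≤ h t)
    (hzero : ∀ t, 0 ≤ t → h t = 0 → t = 0)
    (huc : ∀ xb x : X, ∀ l : ℝ, 0 < l → l < 1 →
      Θ (l • xb + (1 - l) • x) + l * (1 - l) * h ‖xb - x‖ ≤ l * Θ xb + (1 - l) * Θ x)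
    (hwlsc : ∀ (u : ℕ → X) (z : X),
      (∀ f : StrongDual ℝ X,
        Filter.Tendsto (fun n => f (u n)) Filter.atTop (nhds (f z))) →
      Θ z ≤ Filter.liminf (fun n => Θ (u n)) Filter.atTop)
    (x : X) (u : ℕ → X)
    (hweak : ∀ f : StrongDual ℝ X,
      Filter.Tendsto (fun n => f (u n)) Filter.atTop (nhds (f x)))
    (hval : Filter.Tendsto (fun n => Θ (u n)) Filter.atTop (nhds (Θ x))) :
    Filter.Tendsto u Filter.atTop (nhds x) := by
  rcases subsingleton_or_nontrivial X with hX | hX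
  · exact tendsto_const_nhds.congr fun n => Subsingleton.elim x (u n)
  have hpos : ∀ t, 0 < t → 0 < h t := fun t ht =>
    (hnonneg t ht.le).lt_of_ne' fun h0 => ht.ne' (hzero t ht.le h0)
  have hΘ : UniformConvexOn univ h Θ := uniformConvexOn_univ_of_forall_mem_Ioo huc
  have hv : ∀ f : StrongDual ℝ X,
      Tendsto (fun n => f ((1 / 2 : ℝ) • u n + (1 / 2 : ℝ) • x)) atTop (𝓝 (f x)) := by
    simpa only [Convex.combo_self (add_halves (1 : ℝ))] using
      tendsto_dual_smul_add_smul hweak (1 / 2) (1 / 2) x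
  have hbdd := isBoundedUnder_ge_of_forall_tendsto_dual (hΘ.convexOn_of_nonneg hnonneg)
    (hΘ.not_bddAbove_range hnonneg hpos) hwlsc hv
  have hmod := hΘ.tendsto_modulus_norm_sub hnonneg hval hbdd (hwlsc _ x hv)
  obtain ⟨C, hC⟩ := exists_norm_le_of_forall_tendsto_dual hweak
  exact tendsto_iff_norm_sub_tendsto_zero.2 (tendsto_zero_of_tendsto_comp_zero hcont hpos
    (fun n => ⟨norm_nonneg _, (norm_sub_le _ _).trans (add_le_add_left (hC n) _)⟩) hmod)

/-- A proper, weakly lower semi-continuous, uniformly convex function on a Banach space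
has the Kadec property. -/
theorem uniformly_convex_kadec {X : Type*} [NormedAddCommGroup X] [NormedSpace ℝ X]
    [CompleteSpace X]
    (Θ : X → ℝ) (h : ℝ → ℝ) (hcont : Continuous h)
    (hnonneg : ∀ t, 0 ≤ t → 0 ≤ h t)
    (hzero : ∀ t, 0 ≤ t → h t = 0 → t = 0)
    (huc : ∀ xb x : X, ∀ l : ℝ, 0 < l → l < 1 →
      Θ (l • xb + (1 - l) • x) + l * (1 - l) * h ‖xb - x‖ ≤ l * Θ xb + (1 - l) * Θ x)
    (hwlsc : ∀ (u : ℕ → X) (z : X),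
      (∀ f : StrongDual ℝ X,
        Filter.Tendsto (fun n => f (u n)) Filter.atTop (nhds (f z))) →
      Θ z ≤ Filter.liminf (fun n => Θ (u n)) Filter.atTop)
    (x : X) (u : ℕ → X)
    (hweak : ∀ f : StrongDual ℝ X,
      Filter.Tendsto (fun n => f (u n)) Filter.atTop (nhds (f x)))
    (hval : Filter.Tendsto (fun n => Θ (u n)) Filter.atTop (nhds (Θ x))) :
    Filter.Tendsto u Filter.atTop (nhds x) :=
  uniformly_convex_kadec_general Θ h hcont hnonneg hzero huc hwlsc x u hweak hval
end

section
/- Let X be a reflexive Banach space and Θ satisfy the uniform convexity condition D_ξΘ(x̄, x) ≥ φ(‖x̄ − x‖) with φ strictly increasing, continuous, φ(0) = 0. Let F : D(F) ⊂ X → Y satisfy: D(F) is convex, F is Fréchet differentiable, and ‖F(x̄) − F(x) − F′(x)(x̄ − x)‖ ≤ η‖F(x̄) − F(x)‖ for all x̄, x ∈ B_{3ρ}(x₀) ∩ D(F) with 0 ≤ η < 1. If x† is a solution of F(x) = y minimizing D_{ξ₀}Θ(·, x₀) over all solutions in D(Θ) ∩ D(F), and D_{ξ₀}Θ(x†, x₀)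 ≤ φ(ρ), then x† is unique: any other solution x̂ with D_{ξ₀}Θ(x̂, x₀) = D_{ξ₀}Θ(x†, x₀) satisfying the same minimality equals x†. -/
/-!
Under the tangential cone condition with `η < 1`, a point `z` near a solution `x` solves
`F z = y` exactly when `z - x ∈ ker F'(x)`. Hence the solutions in the convex set
`B_ρ(x₀) ∩ D(F)` form a convex set. The bound `D_{ξ₀}Θ(x†, x₀) ≤ φ(ρ)` and uniform convexity
put every minimum-Bregman-distance solution in `B_ρ(x₀)`, and a strictly convex function has at
most one minimiser on a convex set.
-/

/-- `bregmanDist Θ ξ x₀ x` is the paper's `D_ξ Θ(x, x₀)`, with `ξ ∈ ∂Θ(x₀)`. -/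
def bregmanDist {X : Type*} [NormedAddCommGroup X] [NormedSpace ℝ X] (Θ : X → ℝ)
    (ξ : StrongDual ℝ X) (x₀ x : X) : ℝ :=
  Θ x - Θ x₀ - ξ (x - x₀)

def TangentialConeCondition {X Y : Type*} [NormedAddCommGroup X] [NormedSpace ℝ X]
    [NormedAddCommGroup Y] [NormedSpace ℝ Y] (F : X → Y) (F' : X → X →L[ℝ] Y) (η : ℝ)
    (S : Set X) : Prop :=
  ∀ xb ∈ S, ∀ x ∈ S, ‖F xb - F x - F' x (xb - x)‖ ≤ η * ‖F xb - F x‖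

section

variable {X Y : Type*} [NormedAddCommGroup X] [NormedSpace ℝ X]

theorem StrictConvexOn.bregmanDist {Θ : X → ℝ} {s : Set X} (hΘ : StrictConvexOn ℝ s Θ)
    (ξ : StrongDual ℝ X) (x₀ : X) : StrictConvexOn ℝ s (bregmanDist Θ ξ x₀) := by
  have hsplit : _root_.bregmanDist Θ ξ x₀ = (Θ - ⇑ξ) + fun _ => ξ x₀ - Θ x₀ := by
    ext x
    simp only [_root_.bregmanDist, map_sub, Pi.add_apply, Pi.sub_apply]
    ring
  rw [hsplit]
  exact (hΘ.sub_concaveOn (ξ.toLinearMap.concaveOn hΘ.1)).add_const _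

theorem norm_sub_le_of_bregmanDist_le {Θ : X → ℝ} {ξ : StrongDual ℝ X} {x₀ x : X}
    {φ : ℝ → ℝ} {ρ : ℝ} (hφ : StrictMonoOn φ (Set.Ici 0))
    (hlow : φ ‖x - x₀‖ ≤ bregmanDist Θ ξ x₀ x) (hρ : 0 ≤ ρ) (hx : bregmanDist Θ ξ x₀ x ≤ φ ρ) :
    ‖x - x₀‖ ≤ ρ :=
  (hφ.le_iff_le (norm_nonneg _) hρ).1 (hlow.trans hx)

variable [NormedAddCommGroup Y] [NormedSpace ℝ Y] {F : X → Y} {F' : X → X →L[ℝ] Y} {η : ℝ}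
  {S : Set X}

namespace TangentialConeCondition

theorem mono {T : Set X} (h : TangentialConeCondition F F' η T) (hST : S ⊆ T) :
    TangentialConeCondition F F' η S :=
  fun xb hxb x hx => h xb (hST hxb) x (hST hx)

theorem fderiv_apply_sub_eq_zero (h : TangentialConeCondition F F' η S) {x z : X}
    (hx : x ∈ S) (hz : z ∈ S) (hFz : F z = F x) : F' x (z - x) = 0 := by
  have hcone := h z hz x hx
  rw [hFz, sub_self, zero_sub, norm_neg, norm_zero, mul_zero] at hcone
  exact norm_le_zero_iff.1 hcone

theorem eq_of_fderiv_apply_sub_eq_zero (h : TangentialConeCondition F F' η S) (hη : η < 1)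
    {x z : X} (hx : x ∈ S) (hz : z ∈ S) (hF'z : F' x (z - x) = 0) : F z = F x := by
  have hle : ‖F z - F x‖ ≤ η * ‖F z - F x‖ := by simpa [hF'z] using h z hz x hx
  have hzero : ‖F z - F x‖ ≤ 0 := by nlinarith [norm_nonneg (F z - F x)]
  exact sub_eq_zero.1 (norm_le_zero_iff.1 hzero)

theorem convex_setOf_eq (h : TangentialConeCondition F F' η S) (hS : Convex ℝ S) (hη : η < 1)
    (y : Y) : Convex ℝ {x ∈ S | F x = y} := by
  rintro a ⟨ha, rfl⟩ b ⟨hb, hFb⟩ s t hs ht hst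
  have hc : s • a + t • b ∈ S := hS ha hb hs ht hst
  have hdir : s • a + t • b - a = t • (b - a) := by
    rw [eq_sub_of_add_eq hst]
    module
  refine ⟨hc, h.eq_of_fderiv_apply_sub_eq_zero hη ha hc ?_⟩
  rw [hdir, map_smul, h.fderiv_apply_sub_eq_zero ha hb hFb, smul_zero]

end TangentialConeCondition

end

theorem xdag_unique_general {X Y : Type*} [NormedAddCommGroup X] [NormedSpace ℝ X]
    [NormedAddCommGroup Y] [NormedSpace ℝ Y]
    (Θ : X → ℝ) (hconv : StrictConvexOn ℝ Set.univ Θ)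
    (φ : ℝ → ℝ) (hφmono : StrictMonoOn φ (Set.Ici 0))
    (x₀ : X) (ξ₀ : StrongDual ℝ X)
    (hlow : ∀ xb : X, φ ‖xb - x₀‖ ≤ Θ xb - Θ x₀ - ξ₀ (xb - x₀))
    (DF : Set X) (hDF : Convex ℝ DF)
    (F : X → Y) (F' : X → X →L[ℝ] Y)
    (ρ : ℝ) (hρ : 0 < ρ) (η : ℝ) (hη1 : η < 1)
    (hcone : ∀ xb ∈ Metric.closedBall x₀ (3 * ρ) ∩ DF, ∀ x ∈ Metric.closedBall x₀ (3 * ρ) ∩ DF,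
      ‖F xb - F x - F' x (xb - x)‖ ≤ η * ‖F xb - F x‖)
    (y : Y) (xdag : X) (hxdag : xdag ∈ DF) (hFxdag : F xdag = y)
    (hxdagmin : ∀ x ∈ DF, F x = y →
      Θ xdag - Θ x₀ - ξ₀ (xdag - x₀) ≤ Θ x - Θ x₀ - ξ₀ (x - x₀))
    (hxdagρ : Θ xdag - Θ x₀ - ξ₀ (xdag - x₀) ≤ φ ρ)
    (xhat : X) (hxhat : xhat ∈ DF) (hFxhat : F xhat = y)
    (hxhateq : Θ xhat - Θ x₀ - ξ₀ (xhat - x₀) = Θ xdag - Θ x₀ - ξ₀ (xdag - x₀)) :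
    xhat = xdag := by
  set S := Metric.closedBall x₀ ρ ∩ DF
  set K := {x ∈ S | F x = y}
  have hmemS : ∀ x ∈ DF, bregmanDist Θ ξ₀ x₀ x ≤ φ ρ → x ∈ S := fun x hx hxρ =>
    ⟨mem_closedBall_iff_norm.2 (norm_sub_le_of_bregmanDist_le hφmono (hlow x) hρ.le hxρ), hx⟩
  have hconeS : TangentialConeCondition F F' η S :=
    TangentialConeCondition.mono hcone <| Set.inter_subset_inter_left _ <|
      Metric.closedBall_subset_closedBall (by linarith)
  have hK : Convex ℝ K := hconeS.convex_setOf_eq ((convex_closedBall x₀ ρ).inter hDF) hη1 y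
  have hxdagK : xdag ∈ K := ⟨hmemS xdag hxdag hxdagρ, hFxdag⟩
  have hxhatK : xhat ∈ K := ⟨hmemS xhat hxhat (hxhateq.trans_le hxdagρ), hFxhat⟩
  have hmindag : IsMinOn (bregmanDist Θ ξ₀ x₀) K xdag := fun x hx => hxdagmin x hx.1.2 hx.2
  have hminhat : IsMinOn (bregmanDist Θ ξ₀ x₀) K xhat := fun x hx =>
    hxhateq.trans_le (hmindag hx)
  exact ((hconv.subset (Set.subset_univ _) hK).bregmanDist ξ₀ x₀).eq_of_isMinOn hminhat hmindag
    hxhatK hxdagK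

/-- Uniqueness of the minimum-Bregman-distance solution x† under the tangential cone condition. -/
theorem xdag_unique {X Y : Type*} [NormedAddCommGroup X] [NormedSpace ℝ X] [CompleteSpace X]
    [NormedAddCommGroup Y] [NormedSpace ℝ Y]
    (hrefl : Function.Surjective (NormedSpace.inclusionInDoubleDual ℝ X))
    (Θ : X → ℝ) (hconv : StrictConvexOn ℝ Set.univ Θ)
    (φ : ℝ → ℝ) (hφmono : StrictMonoOn φ (Set.Ici 0)) (hφcont : Continuous φ) (hφ0 : φ 0 = 0)
    (x₀ : X) (ξ₀ : StrongDual ℝ X)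
    (hξ₀ : ∀ z, Θ x₀ + ξ₀ (z - x₀) ≤ Θ z)
    (hlow : ∀ xb : X, φ ‖xb - x₀‖ ≤ Θ xb - Θ x₀ - ξ₀ (xb - x₀))
    (DF : Set X) (hDF : Convex ℝ DF)
    (F : X → Y) (F' : X → X →L[ℝ] Y)
    (hFderiv : ∀ x ∈ DF, HasFDerivAt F (F' x) x)
    (ρ : ℝ) (hρ : 0 < ρ) (η : ℝ) (hη0 : 0 ≤ η) (hη1 : η < 1)
    (hcone : ∀ xb ∈ Metric.closedBall x₀ (3 * ρ) ∩ DF, ∀ x ∈ Metric.closedBall x₀ (3 * ρ) ∩ DF,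
      ‖F xb - F x - F' x (xb - x)‖ ≤ η * ‖F xb - F x‖)
    (y : Y) (xdag : X) (hxdag : xdag ∈ DF) (hFxdag : F xdag = y)
    (hxdagmin : ∀ x ∈ DF, F x = y →
      Θ xdag - Θ x₀ - ξ₀ (xdag - x₀) ≤ Θ x - Θ x₀ - ξ₀ (x - x₀))
    (hxdagρ : Θ xdag - Θ x₀ - ξ₀ (xdag - x₀) ≤ φ ρ)
    (xhat : X) (hxhat : xhat ∈ DF) (hFxhat : F xhat = y)
    (hxhateq : Θ xhat - Θ x₀ - ξ₀ (xhat - x₀) = Θ xdag - Θ x₀ - ξ₀ (xdag - x₀))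
    (hxhatmin : ∀ x ∈ DF, F x = y →
      Θ xhat - Θ x₀ - ξ₀ (xhat - x₀) ≤ Θ x - Θ x₀ - ξ₀ (x - x₀)) :
    xhat = xdag :=
  xdag_unique_general Θ hconv φ hφmono x₀ ξ₀ hlow DF hDF F F' ρ hρ η hη1 hcone y xdag hxdag hFxdag
    hxdagmin hxdagρ xhat hxhat hFxhat hxhateq
end

section
/- Let F : D(F) ⊂ X → Y be Fréchet differentiable on a convex domain and satisfy the tangential cone condition ‖F(x̄) − F(x) − F′(x)(x̄ − x)‖ ≤ η‖F(x̄) − F(x)‖ with 0 ≤ η < 1 for all x̄, x in a convex subset S of D(F). If x̂, x† ∈ S satisfy F(x̂) = F(x†), then F′(x†)(x̂ − x†) = 0, and moreover F(λx̂ + (1−λ)x†) = F(x†) for all λ ∈ [0,1]. -/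
/-- Under the tangential cone condition on a convex set, two solutions with the same image
give a vanishing derivative direction and the whole segment maps to the same value. -/
theorem tangential_cone_segment {X Y : Type*} [NormedAddCommGroup X] [NormedSpace ℝ X]
    [NormedAddCommGroup Y] [NormedSpace ℝ Y]
    (DF S : Set X) (hDFconv : Convex ℝ DF) (hSconv : Convex ℝ S) (hSsub : S ⊆ DF)
    (F : X → Y) (F' : X → X →L[ℝ] Y)
    (hFderiv : ∀ x ∈ DF, HasFDerivAt F (F' x) x)
    (η : ℝ) (hη0 : 0 ≤ η) (hη1 : η < 1)
    (hcone : ∀ xb ∈ S, ∀ x ∈ S, ‖F xb - F x - F' x (xb - x)‖ ≤ η * ‖F xb - F x‖)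
    (xhat xdag : X) (h1 : xhat ∈ S) (h2 : xdag ∈ S) (heq : F xhat = F xdag) :
    F' xdag (xhat - xdag) = 0 ∧
      ∀ l : ℝ, 0 ≤ l → l ≤ 1 → F (l • xhat + (1 - l) • xdag) = F xdag := by
  have h0 : F' xdag (xhat - xdag) = 0 := by
    have h := hcone xhat h1 xdag h2
    rw [heq, sub_self, norm_zero, mul_zero, zero_sub, norm_neg] at h
    exact norm_le_zero_iff.mp h
  refine ⟨h0, fun l hl0 hl1 => ?_⟩
  set xl := l • xhat + (1 - l) • xdag with hxl
  have hxlS : xl ∈ S := hSconv h1 h2 hl0 (by linarith) (by ring)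
  set u := F xdag - F xl with hu
  set v := F' xl (xhat - xdag) with hv
  have c1 : ‖u - (1 - l) • v‖ ≤ η * ‖u‖ := by
    have h := hcone xhat h1 xl hxlS
    have hd1 : xhat - xl = (1 - l) • (xhat - xdag) := by rw [hxl]; module
    rw [heq, hd1, map_smul] at h
    exact h
  have c2 : ‖u + l • v‖ ≤ η * ‖u‖ := by
    have h := hcone xdag h2 xl hxlS
    have hd2 : xdag - xl = -(l • (xhat - xdag)) := by rw [hxl]; module
    rw [hd2, map_neg, map_smul, sub_neg_eq_add] at h
    exact h
  have key : ‖u‖ ≤ η * ‖u‖ := by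
    have hcomb : u = l • (u - (1 - l) • v) + (1 - l) • (u + l • v) := by module
    calc ‖u‖ = ‖l • (u - (1 - l) • v) + (1 - l) • (u + l • v)‖ := by rw [← hcomb]
      _ ≤ ‖l • (u - (1 - l) • v)‖ + ‖(1 - l) • (u + l • v)‖ := norm_add_le _ _
      _ = l * ‖u - (1 - l) • v‖ + (1 - l) * ‖u + l • v‖ := by
          rw [norm_smul, norm_smul, Real.norm_of_nonneg hl0,
            Real.norm_of_nonneg (by linarith)]
      _ ≤ l * (η * ‖u‖) + (1 - l) * (η * ‖u‖) := by
          gcongr <;> linarith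
      _ = η * ‖u‖ := by ring
  have hu0 : u = 0 := by
    rw [← norm_le_zero_iff]
    nlinarith [norm_nonneg u]
  exact (sub_eq_zero.mp hu0).symm
end

section
/- If a solution satisfies the discrepancy-based residual bound ‖F(x_n^δ) − y^δ‖ > τδ for 0 ≤ n < n_δ with τ > (1+η)/(1−η), and the per-step estimate D_{ξ_n^δ}Θ(x̂, x_n^δ) − D_{ξ_{n−1}^δ}Θ(x̂, x_{n−1}^δ) ≤ −(1/α_n)(1 − η − (1+η)/τ)‖F(x_n^δ) − y^δ‖^r holds for 1 ≤ n < n_δ, then summing gives ‖F(x_n^δ) − y^δ‖^r ∑_{j=1}^n α_j^{−1} ≤ C₁ D_{ξ_0}Θ(x̂, x_0) with C₁ = τ/((1−η)τ − 1 − η), using monotonicity of the residuals. Consequently, if ∑_{j=1}^∞ α_j^{−1} = ∞, the stopping index n_δ is finite. -/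
/-!
Telescoping the per-step decrease of the Bregman distance gives
`D n + c ∑_{1 ≤ j ≤ n} α_j⁻¹ R_j ^ r ≤ D 0` with `c = 1 - η - (1 + η) / τ > 0`; since the residuals
decrease, each `R_j ^ r` may be replaced by `R_n ^ r`, and `c⁻¹` is the constant `C₁`. If the
discrepancy principle never stopped, `(τ δ) ^ r ∑_{1 ≤ j ≤ n} α_j⁻¹` would stay below `C₁ D 0`,
contradicting the divergence of `∑ α_j⁻¹`.
-/

open Finset Filter

theorem add_sum_Icc_le_of_add_le {G : Type*} [AddCommGroup G] [PartialOrder G]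
    [IsOrderedAddMonoid G] {D e : ℕ → G} {n : ℕ}
    (h : ∀ k ∈ Icc 1 n, D k + e k ≤ D (k - 1)) :
    D n + ∑ k ∈ Icc 1 n, e k ≤ D 0 := by
  induction n with
  | zero => simp
  | succ n ih =>
    have hlast : D (n + 1) + e (n + 1) ≤ D n := h (n + 1) (by simp)
    have hprev := ih fun k hk => h k (Icc_subset_Icc_right n.le_succ hk)
    calc D (n + 1) + ∑ k ∈ Icc 1 (n + 1), e k
        = D (n + 1) + e (n + 1) + ∑ k ∈ Icc 1 n, e k := by
          rw [sum_Icc_succ_top (by omega), add_comm _ (e _), add_assoc]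
      _ ≤ D n + ∑ k ∈ Icc 1 n, e k := by gcongr
      _ ≤ D 0 := hprev

theorem rpow_mul_sum_le_sum_mul_rpow {R w : ℕ → ℝ} {r : ℝ} {n : ℕ} {s : Finset ℕ}
    (hR : Antitone R) (hRn : 0 ≤ R n) (hr : 0 ≤ r)
    (hw : ∀ j ∈ s, 0 ≤ w j) (hs : ∀ j ∈ s, j ≤ n) :
    R n ^ r * ∑ j ∈ s, w j ≤ ∑ j ∈ s, w j * R j ^ r := by
  rw [mul_sum]
  refine sum_le_sum fun j hj => ?_
  rw [mul_comm]
  gcongr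
  · exact hw j hj
  · exact hR (hs j hj)

theorem mul_rpow_mul_sum_inv_le {R D α : ℕ → ℝ} {c r : ℝ} {n : ℕ}
    (hc : 0 ≤ c) (hr : 0 ≤ r) (hα : ∀ j, 0 < α j) (hR : Antitone R) (hRn : 0 ≤ R n)
    (hDn : 0 ≤ D n)
    (hstep : ∀ k ∈ Icc 1 n, D k - D (k - 1) ≤ -(1 / α k) * c * R k ^ r) :
    c * (R n ^ r * ∑ j ∈ Icc 1 n, (α j)⁻¹) ≤ D 0 := by
  have htele : D n + ∑ k ∈ Icc 1 n, c * ((α k)⁻¹ * R k ^ r) ≤ D 0 :=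
    add_sum_Icc_le_of_add_le fun k hk => by linear_combination hstep k hk
  have hmono := rpow_mul_sum_le_sum_mul_rpow (w := fun j => (α j)⁻¹) (s := Icc 1 n) hR hRn hr
    (fun j _ => (inv_pos.2 (hα j)).le) (fun j hj => (mem_Icc.1 hj).2)
  rw [← mul_sum] at htele
  linarith [mul_le_mul_of_nonneg_left hmono hc]

theorem discrepancy_gap_pos {τ η : ℝ} (hη0 : 0 ≤ η) (hη1 : η < 1)
    (hτ : (1 + η) / (1 - η) < τ) :
    0 < τ ∧ 0 < (1 - η) * τ - 1 - η := by
  have h1η : 0 < 1 - η := by linarith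
  have hτ' : 1 + η < τ * (1 - η) := (div_lt_iff₀ h1η).1 hτ
  exact ⟨lt_of_le_of_lt (div_nonneg (by linarith) h1η.le) hτ, by linarith⟩

/-- Summing the per-step estimates gives the residual bound, and divergence of ∑ 1/αⱼ
forces the discrepancy principle to stop after finitely many steps. -/
theorem discrepancy_stops (τ δ η r : ℝ) (hη0 : 0 ≤ η) (hη1 : η < 1)
    (hτ : (1 + η) / (1 - η) < τ) (hδ : 0 < δ) (hr : 1 < r)
    (R D α : ℕ → ℝ) (hα : ∀ n, 0 < α n)
    (hRmono : ∀ n, R (n + 1) ≤ R n) (hDnonneg : ∀ n, 0 ≤ D n)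
    (hstep : ∀ n, 1 ≤ n → (∀ j ≤ n, τ * δ < R j) →
      D n - D (n - 1) ≤ -(1 / α n) * (1 - η - (1 + η) / τ) * R n ^ r)
    (hdiv : Filter.Tendsto (fun n => ∑ j ∈ Finset.Icc 1 n, (α j)⁻¹)
      Filter.atTop Filter.atTop) :
    (∀ n, (∀ j ≤ n, τ * δ < R j) →
      R n ^ r * ∑ j ∈ Finset.Icc 1 n, (α j)⁻¹ ≤ (τ / ((1 - η) * τ - 1 - η)) * D 0) ∧
    (∃ n, R n ≤ τ * δ) := by
  obtain ⟨hτ0, hgap⟩ := discrepancy_gap_pos hη0 hη1 hτ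
  have hc : 1 - η - (1 + η) / τ = ((1 - η) * τ - 1 - η) / τ := by
    field_simp
    ring
  have hτδ : 0 < τ * δ := mul_pos hτ0 hδ
  have hbound : ∀ n, (∀ j ≤ n, τ * δ < R j) →
      R n ^ r * ∑ j ∈ Icc 1 n, (α j)⁻¹ ≤ (τ / ((1 - η) * τ - 1 - η)) * D 0 := by
    intro n hres
    have hsum := mul_rpow_mul_sum_inv_le (div_pos hgap hτ0).le (by linarith) hα
      (antitone_nat_of_succ_le hRmono) (hτδ.trans (hres n le_rfl)).le (hDnonneg n)
      fun k hk => hc ▸ hstep k (mem_Icc.1 hk).1 fun j hj => hres j (hj.trans (mem_Icc.1 hk).2)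
    calc R n ^ r * ∑ j ∈ Icc 1 n, (α j)⁻¹ ≤ D 0 / (((1 - η) * τ - 1 - η) / τ) :=
          (le_div_iff₀' (div_pos hgap hτ0)).2 hsum
      _ = τ / ((1 - η) * τ - 1 - η) * D 0 := by field_simp
  refine ⟨hbound, ?_⟩
  by_contra! hnever
  obtain ⟨n, hn⟩ := ((hdiv.const_mul_atTop (Real.rpow_pos_of_pos hτδ r)).eventually_gt_atTop
    ((τ / ((1 - η) * τ - 1 - η)) * D 0)).exists
  have hlower : (τ * δ) ^ r * ∑ j ∈ Icc 1 n, (α j)⁻¹ ≤ R n ^ r * ∑ j ∈ Icc 1 n, (α j)⁻¹ := by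
    gcongr
    · exact sum_nonneg fun j _ => (inv_pos.2 (hα j)).le
    · exact (hnever n).le
  linarith [hbound n fun j _ => hnever j]
end
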